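/- Let U ⊆ ℝᵐ be open and φ₁,…,φ_n : U → ℂ be smooth functions forming an eigenfamily with eigenvalues λ = μ = 0, i.e. Δφᵢ = 0 and κ(φᵢ,φⱼ) = 0 for all 1 ≤ i, j ≤ n. Let R, S : ℂⁿ → ℂ be homogeneous polynomials of the same positive degree. Then the function Φ = R(φ₁,…,φ_n)/S(φ₁,…,φ_n), defined on the open set {x ∈ U : S(φ₁(x),…,φ_n(x)) ≠ 0}, satisfies ΔΦ = 0 and κ(Φ,Φ) = 0 there. -/

import Mathlib

/-- The partial derivative in direction `k` of a complex-valued function on `ℝᵐ`. -/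
noncomputable def pd {m : ℕ} (k : Fin m) (f : (Fin m → ℝ) → ℂ) : (Fin m → ℝ) → ℂ :=
  fun x => fderiv ℝ f x (Pi.single k 1)

/-- The Euclidean Laplacian `Δf = ∑ₖ ∂²f/∂xₖ²`. -/
noncomputable def lap {m : ℕ} (f : (Fin m → ℝ) → ℂ) : (Fin m → ℝ) → ℂ :=
  fun x => ∑ k : Fin m, pd k (pd k f) x

/-- The conformality operator `κ(f,g) = ∑ₖ (∂f/∂xₖ)(∂g/∂xₖ)`. -/
noncomputable def conf {m : ℕ} (f g : (Fin m → ℝ) → ℂ) : (Fin m → ℝ) → ℂ :=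
  fun x => ∑ k : Fin m, pd k f x * pd k g x

section helpers
variable {m : ℕ} {V : Set (Fin m → ℝ)} {f g h f₁ f₂ : (Fin m → ℝ) → ℂ} {x : Fin m → ℝ} {k : Fin m}

lemma pd_congr (hV : IsOpen V) (hfg : Set.EqOn f g V) (hx : x ∈ V) : pd k f x = pd k g x := by
  unfold pd
  rw [Filter.EventuallyEq.fderiv_eq (hfg.eventuallyEq_of_mem (hV.mem_nhds hx))]

lemma diffAt (hV : IsOpen V) (hf : ContDiffOn ℝ (⊤ : ℕ∞) f V) (hx : x ∈ V) :
    DifferentiableAt ℝ f x :=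
  (hf.differentiableOn (by simp)).differentiableAt (hV.mem_nhds hx)

lemma pd_contDiffOn (hV : IsOpen V) (hf : ContDiffOn ℝ (⊤ : ℕ∞) f V) :
    ContDiffOn ℝ (⊤ : ℕ∞) (pd k f) V :=
  (hf.fderiv_of_isOpen hV (by simp)).clm_apply contDiffOn_const

lemma pd_add (hf : DifferentiableAt ℝ f x) (hg : DifferentiableAt ℝ g x) :
    pd k (fun y => f y + g y) x = pd k f x + pd k g x := by
  unfold pd; rw [fderiv_fun_add hf hg]; simp

lemma pd_mul (hf : DifferentiableAt ℝ f x) (hg : DifferentiableAt ℝ g x) :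
    pd k (fun y => f y * g y) x = pd k f x * g x + f x * pd k g x := by
  unfold pd; rw [fderiv_fun_mul hf hg]; simp [smul_eq_mul]; ring

lemma pd_const (c : ℂ) : pd k (fun _ => c) x = 0 := by
  unfold pd; simp

lemma conf_comm : conf f g = conf g f := by
  funext x; unfold conf; exact Finset.sum_congr rfl fun k _ => mul_comm _ _

lemma conf_congr_left (hV : IsOpen V) (hfg : Set.EqOn f₁ f₂ V) (hx : x ∈ V) :
    conf f₁ g x = conf f₂ g x := by
  unfold conf
  exact Finset.sum_congr rfl fun k _ => by rw [pd_congr hV hfg hx]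

lemma conf_const_left (c : ℂ) : conf (fun _ => c) g x = 0 := by
  simp [conf, pd_const]

lemma conf_add_left (hf : DifferentiableAt ℝ f x) (hg : DifferentiableAt ℝ g x) :
    conf (fun y => f y + g y) h x = conf f h x + conf g h x := by
  unfold conf
  rw [← Finset.sum_add_distrib]
  exact Finset.sum_congr rfl fun k _ => by rw [pd_add hf hg]; ring

lemma conf_mul_left (hf : DifferentiableAt ℝ f x) (hg : DifferentiableAt ℝ g x) :
    conf (fun y => f y * g y) h x = f x * conf g h x + g x * conf f h x := by
  unfold conf
  rw [Finset.mul_sum, Finset.mul_sum, ← Finset.sum_add_distrib]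
  exact Finset.sum_congr rfl fun k _ => by rw [pd_mul hf hg]; ring

lemma lap_congr (hV : IsOpen V) (hfg : Set.EqOn f g V) (hx : x ∈ V) :
    lap f x = lap g x := by
  unfold lap
  refine Finset.sum_congr rfl fun k _ => ?_
  have h1 : Set.EqOn (pd k f) (pd k g) V := fun y hy => pd_congr hV hfg hy
  exact pd_congr hV h1 hx

lemma lap_const (c : ℂ) : lap (fun _ => c) x = 0 := by
  unfold lap
  refine Finset.sum_eq_zero fun k _ => ?_
  have h1 : pd k (fun _ : Fin m → ℝ => c) = fun _ => (0 : ℂ) := funext fun y => pd_const c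
  rw [h1, pd_const]

lemma lap_add (hV : IsOpen V) (hf : ContDiffOn ℝ (⊤ : ℕ∞) f V) (hg : ContDiffOn ℝ (⊤ : ℕ∞) g V)
    (hx : x ∈ V) : lap (fun y => f y + g y) x = lap f x + lap g x := by
  unfold lap
  rw [← Finset.sum_add_distrib]
  refine Finset.sum_congr rfl fun k _ => ?_
  have h1 : Set.EqOn (pd k (fun y => f y + g y)) (fun y => pd k f y + pd k g y) V :=
    fun y hy => pd_add (diffAt hV hf hy) (diffAt hV hg hy)
  rw [pd_congr hV h1 hx,
    pd_add (diffAt hV (pd_contDiffOn hV hf) hx) (diffAt hV (pd_contDiffOn hV hg) hx)]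

lemma lap_mul (hV : IsOpen V) (hf : ContDiffOn ℝ (⊤ : ℕ∞) f V) (hg : ContDiffOn ℝ (⊤ : ℕ∞) g V)
    (hx : x ∈ V) :
    lap (fun y => f y * g y) x = lap f x * g x + 2 * conf f g x + f x * lap g x := by
  unfold lap conf
  have key : ∀ k : Fin m, pd k (pd k (fun y => f y * g y)) x
      = pd k (pd k f) x * g x + 2 * (pd k f x * pd k g x) + f x * pd k (pd k g) x := by
    intro k
    have h1 : Set.EqOn (pd k (fun y => f y * g y))
        (fun y => pd k f y * g y + f y * pd k g y) V :=
      fun y hy => pd_mul (diffAt hV hf hy) (diffAt hV hg hy)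
    rw [pd_congr hV h1 hx,
      pd_add (f := fun y => pd k f y * g y) (g := fun y => f y * pd k g y)
        ((diffAt hV (pd_contDiffOn hV hf) hx).mul (diffAt hV hg hx))
        ((diffAt hV hf hx).mul (diffAt hV (pd_contDiffOn hV hg) hx)),
      pd_mul (diffAt hV (pd_contDiffOn hV hf) hx) (diffAt hV hg hx),
      pd_mul (diffAt hV hf hx) (diffAt hV (pd_contDiffOn hV hg) hx)]
    ring
  rw [Finset.sum_congr rfl fun k _ => key k]
  rw [Finset.sum_add_distrib, Finset.sum_add_distrib, ← Finset.sum_mul, ← Finset.mul_sum,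
    ← Finset.mul_sum]

end helpers

theorem stmt8 (m n : ℕ) (U : Set (Fin m → ℝ)) (hU : IsOpen U)
    (φ : Fin n → (Fin m → ℝ) → ℂ)
    (hφ : ∀ i, ContDiffOn ℝ (⊤ : ℕ∞) (φ i) U)
    (hl : ∀ i, ∀ x ∈ U, lap (φ i) x = 0)
    (hc : ∀ i j, ∀ x ∈ U, conf (φ i) (φ j) x = 0)
    (d : ℕ) (hd : 0 < d)
    (R S : MvPolynomial (Fin n) ℂ)
    (hR : R.IsHomogeneous d) (hS : S.IsHomogeneous d) :
    ∀ x ∈ U, MvPolynomial.eval (fun i => φ i x) S ≠ 0 →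
      lap (fun y => MvPolynomial.eval (fun i => φ i y) R /
        MvPolynomial.eval (fun i => φ i y) S) x = 0 ∧
      conf (fun y => MvPolynomial.eval (fun i => φ i y) R /
          MvPolynomial.eval (fun i => φ i y) S)
        (fun y => MvPolynomial.eval (fun i => φ i y) R /
          MvPolynomial.eval (fun i => φ i y) S) x = 0 := by
  -- F P := evaluation of P along φ
  have hF : ∀ P : MvPolynomial (Fin n) ℂ,
      ContDiffOn ℝ (⊤ : ℕ∞) (fun y => MvPolynomial.eval (fun i => φ i y) P) U := by
    intro P
    induction P using MvPolynomial.induction_on with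
    | C a => simpa using contDiffOn_const
    | add p q hp hq => simp only [MvPolynomial.eval_add]; exact hp.add hq
    | mul_X p i hp => simp only [MvPolynomial.eval_mul, MvPolynomial.eval_X]; exact hp.mul (hφ i)
  -- conf with φ i
  have hB : ∀ (P : MvPolynomial (Fin n) ℂ) (i : Fin n), ∀ x ∈ U,
      conf (fun y => MvPolynomial.eval (fun i => φ i y) P) (φ i) x = 0 := by
    intro P
    induction P using MvPolynomial.induction_on with
    | C a => intro i x hx; simp only [MvPolynomial.eval_C]; exact conf_const_left a
    | add p q hp hq =>
        intro i x hx
        simp only [MvPolynomial.eval_add]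
        rw [conf_add_left (diffAt hU (hF p) hx) (diffAt hU (hF q) hx), hp i x hx, hq i x hx,
          add_zero]
    | mul_X p j hp =>
        intro i x hx
        simp only [MvPolynomial.eval_mul, MvPolynomial.eval_X]
        rw [conf_mul_left (diffAt hU (hF p) hx) (diffAt hU (hφ j) hx), hp i x hx,
          hc j i x hx]
        ring
  -- conf between two evaluations
  have hC2 : ∀ (P Q : MvPolynomial (Fin n) ℂ), ∀ x ∈ U,
      conf (fun y => MvPolynomial.eval (fun i => φ i y) P)
        (fun y => MvPolynomial.eval (fun i => φ i y) Q) x = 0 := by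
    intro P Q
    induction Q using MvPolynomial.induction_on with
    | C a =>
        intro x hx
        simp only [MvPolynomial.eval_C]
        rw [conf_comm]; exact conf_const_left a
    | add q r hq hr =>
        intro x hx
        simp only [MvPolynomial.eval_add]
        rw [conf_comm, conf_add_left (diffAt hU (hF q) hx) (diffAt hU (hF r) hx),
          conf_comm (f := fun y => MvPolynomial.eval (fun i => φ i y) q),
          conf_comm (f := fun y => MvPolynomial.eval (fun i => φ i y) r), hq x hx, hr x hx,
          add_zero]
    | mul_X q j hq =>
        intro x hx
        simp only [MvPolynomial.eval_mul, MvPolynomial.eval_X]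
        rw [conf_comm, conf_mul_left (diffAt hU (hF q) hx) (diffAt hU (hφ j) hx),
          conf_comm (f := fun y => MvPolynomial.eval (fun i => φ i y) q),
          conf_comm (f := φ j), hq x hx, hB P j x hx]
        ring
  -- laplacian of evaluations
  have hD : ∀ (P : MvPolynomial (Fin n) ℂ), ∀ x ∈ U,
      lap (fun y => MvPolynomial.eval (fun i => φ i y) P) x = 0 := by
    intro P
    induction P using MvPolynomial.induction_on with
    | C a => intro x hx; simp only [MvPolynomial.eval_C]; exact lap_const a
    | add p q hp hq =>
        intro x hx
        simp only [MvPolynomial.eval_add]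
        rw [lap_add hU (hF p) (hF q) hx, hp x hx, hq x hx, add_zero]
    | mul_X p j hp =>
        intro x hx
        simp only [MvPolynomial.eval_mul, MvPolynomial.eval_X]
        rw [lap_mul hU (hF p) (hφ j) hx, hp x hx, hB p j x hx, hl j x hx]
        ring
  intro x hx hSx
  set f : (Fin m → ℝ) → ℂ := fun y => MvPolynomial.eval (fun i => φ i y) R with hfdef
  set g : (Fin m → ℝ) → ℂ := fun y => MvPolynomial.eval (fun i => φ i y) S with hgdef
  set h : (Fin m → ℝ) → ℂ := fun y => f y / g y with hhdef
  set V : Set (Fin m → ℝ) := U ∩ g ⁻¹' {(0 : ℂ)}ᶜ with hVdef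
  have hV : IsOpen V := (hF S).continuousOn.isOpen_inter_preimage hU isOpen_compl_singleton
  have hxV : x ∈ V := ⟨hx, by simpa using hSx⟩
  have hgne : ∀ y ∈ V, g y ≠ 0 := fun y hy => by simpa using hy.2
  have hhC : ContDiffOn ℝ (⊤ : ℕ∞) h V := by
    have h0 : ContDiffOn ℝ (⊤ : ℕ∞) (fun y => f y * (g y)⁻¹) V :=
      ((hF R).mono Set.inter_subset_left).mul
        (((hF S).mono Set.inter_subset_left).inv hgne)
    simpa [hhdef, div_eq_mul_inv] using h0
  have hgC : ContDiffOn ℝ (⊤ : ℕ∞) g V := (hF S).mono Set.inter_subset_left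
  have heq : Set.EqOn (fun y => h y * g y) f V := fun y hy => div_mul_cancel₀ _ (hgne y hy)
  -- conf h g = 0 at x
  have e1 : conf f g x = 0 := hC2 R S x hx
  have e2 : conf g g x = 0 := hC2 S S x hx
  have e3 : conf (fun y => h y * g y) g x = 0 := by rw [conf_congr_left hV heq hxV]; exact e1
  have dh := diffAt hV hhC hxV
  have dg := diffAt hV hgC hxV
  have hg0 : g x ≠ 0 := hgne x hxV
  have e4 : conf h g x = 0 := by
    have expand := conf_mul_left (g := g) (h := g) dh dg
    rw [e3, e2] at expand
    have : g x * conf h g x = 0 := by linear_combination -expand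
    rcases mul_eq_zero.mp this with h' | h'
    · exact absurd h' hg0
    · exact h'
  -- conf h h = 0 at x
  have e5 : conf f f x = 0 := hC2 R R x hx
  have e6 : conf (fun y => h y * g y) (fun y => h y * g y) x = 0 := by
    rw [conf_congr_left hV heq hxV, conf_comm, conf_congr_left hV heq hxV, conf_comm]
    exact e5
  have e7 : conf h h x = 0 := by
    have expand := conf_mul_left (g := g) (h := fun y => h y * g y) dh dg
    rw [e6] at expand
    have t1 : conf g (fun y => h y * g y) x = 0 := by
      rw [conf_comm]; exact e3
    have t2 : conf h (fun y => h y * g y) x = h x * conf h g x + g x * conf h h x := by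
      rw [conf_comm, conf_mul_left dh dg, conf_comm (f := g), conf_comm (f := h) (g := h)]
    rw [t1, t2, e4] at expand
    have : g x * (g x * conf h h x) = 0 := by linear_combination -expand
    rcases mul_eq_zero.mp this with h' | h'
    · exact absurd h' hg0
    · rcases mul_eq_zero.mp h' with h'' | h''
      · exact absurd h'' hg0
      · exact h''
  -- lap h = 0 at x
  have l1 : lap f x = 0 := hD R x hx
  have l2 : lap g x = 0 := hD S x hx
  have l3 : lap (fun y => h y * g y) x = 0 := by rw [lap_congr hV heq hxV]; exact l1
  have l4 : lap h x = 0 := by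
    have := lap_mul hV hhC hgC hxV
    rw [l3, l2, e4] at this
    have : lap h x * g x = 0 := by linear_combination -this
    rcases mul_eq_zero.mp this with h' | h'
    · exact h'
    · exact absurd h' hg0
  exact ⟨l4, e7⟩
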